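/- arXiv:2605.31019 — 5 statements merged into one kernel-verified Lean document; each statement's English description precedes it below -/
import Mathlib

section
/- For each m ∈ [2,k], the operator T^m_μ := ∂_1 ∂_{m−1} + ∂_m (E + μ), where E := Σ_{h=1}^k σ_h ∂_h, annihilates P_σ(a)^{−μ} for every fixed a (with |a| large enough). -/
open Finset

noncomputable section

/-- The partial derivative `∂_h` (with respect to the variable `σ_h`) of a function of
`σ = (σ_0, σ_1, σ_2, …)`. -/
def pd (h : ℕ) (f : (ℕ → ℂ) → ℂ) : (ℕ → ℂ) → ℂ :=
  fun σ => deriv (fun t => f (Function.update σ h t)) (σ h)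

/-- `P_σ(a) := a^k + Σ_{h=1}^k (-1)^h σ_h a^{k-h}`. -/
def Pfun (k : ℕ) (σ : ℕ → ℂ) (a : ℂ) : ℂ :=
  a ^ k + ∑ h ∈ Icc 1 k, (-1 : ℂ) ^ h * σ h * a ^ (k - h)

/-- The branch `P_σ(a)^{-μ} := exp (-μ Log (P_σ(a)))` as a function of `σ` (with `a` fixed). -/
def fpow (k : ℕ) (μ a : ℂ) (σ : ℕ → ℂ) : ℂ :=
  Complex.exp (-μ * Complex.log (Pfun k σ a))

/-!
`P_σ(a)` is affine in `σ`, with constant slopes `∂_h P = (-1)^h a^(k-h)`, so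
`∂_h P^{-μ} = -μ (∂_h P) P^{-μ-1}`, and Euler's identity gives `(E + μ) P^{-μ} = μ a^k P^{-μ-1}`.
Hence both terms of `T^m_μ P^{-μ}` are multiples of `μ (μ+1) P^{-μ-2}`, with coefficients
`(∂_1 P)(∂_{m-1} P)` and `-a^k ∂_m P`, which are equal.
-/

open Function

def pdPfun (k : ℕ) (a : ℂ) (h : ℕ) : ℂ := (-1) ^ h * a ^ (k - h)

lemma Pfun_eq_add_sum (k : ℕ) (σ : ℕ → ℂ) (a : ℂ) :
    Pfun k σ a = a ^ k + ∑ h ∈ Icc 1 k, σ h * pdPfun k a h := by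
  unfold Pfun pdPfun
  congr 1
  exact sum_congr rfl fun _ _ => by ring

lemma Pfun_update (k : ℕ) (σ : ℕ → ℂ) (a : ℂ) {h : ℕ} (hh : h ∈ Icc 1 k) (t : ℂ) :
    Pfun k (update σ h t) a = Pfun k σ a + pdPfun k a h * (t - σ h) := by
  have hsum : ∑ j ∈ Icc 1 k, update σ h t j * pdPfun k a j - ∑ j ∈ Icc 1 k, σ j * pdPfun k a j
      = pdPfun k a h * (t - σ h) := by
    rw [← sum_sub_distrib, sum_eq_single_of_mem h hh fun j _ hj => by simp [update_of_ne hj]]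
    simp only [update_self]
    ring
  rw [Pfun_eq_add_sum, Pfun_eq_add_sum]
  linear_combination hsum

lemma hasDerivAt_Pfun_update (k : ℕ) (σ : ℕ → ℂ) (a : ℂ) {h : ℕ} (hh : h ∈ Icc 1 k) :
    HasDerivAt (fun t => Pfun k (update σ h t) a) (pdPfun k a h) (σ h) := by
  simp only [Pfun_update k σ a hh]
  simpa using ((hasDerivAt_id (σ h)).sub_const (σ h)).const_mul (pdPfun k a h)
    |>.const_add (Pfun k σ a)

lemma fpow_eq_Pfun_mul {k : ℕ} {σ : ℕ → ℂ} {a : ℂ} (μ : ℂ) (hP : Pfun k σ a ≠ 0) :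
    fpow k μ a σ = Pfun k σ a * fpow k (μ + 1) a σ := by
  unfold fpow
  rw [show -μ * Complex.log (Pfun k σ a)
      = Complex.log (Pfun k σ a) + -(μ + 1) * Complex.log (Pfun k σ a) by ring,
    Complex.exp_add, Complex.exp_log hP]

lemma hasDerivAt_fpow_update (k : ℕ) (μ a : ℂ) {σ : ℕ → ℂ} {h : ℕ} (hh : h ∈ Icc 1 k)
    (hP : Pfun k σ a ∈ Complex.slitPlane) :
    HasDerivAt (fun t => fpow k μ a (update σ h t)) (-μ * pdPfun k a h * fpow k (μ + 1) a σ)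
      (σ h) := by
  have hlog := (Complex.hasDerivAt_log (by rwa [update_eq_self])).comp (σ h)
    (hasDerivAt_Pfun_update k σ a hh)
  rw [update_eq_self] at hlog
  refine (hlog.const_mul (-μ)).cexp.congr_deriv ?_
  change fpow k μ a (update σ h (σ h)) * _ = _
  rw [update_eq_self, fpow_eq_Pfun_mul μ (Complex.slitPlane_ne_zero hP)]
  field_simp [Complex.slitPlane_ne_zero hP]

lemma pd_fpow (k : ℕ) (μ a : ℂ) {σ : ℕ → ℂ} {h : ℕ} (hh : h ∈ Icc 1 k)
    (hP : Pfun k σ a ∈ Complex.slitPlane) :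
    pd h (fpow k μ a) σ = -μ * pdPfun k a h * fpow k (μ + 1) a σ :=
  (hasDerivAt_fpow_update k μ a hh hP).deriv

lemma sum_mul_pd_fpow_add (k : ℕ) (μ a : ℂ) {σ : ℕ → ℂ} (hP : Pfun k σ a ∈ Complex.slitPlane) :
    ∑ h ∈ Icc 1 k, σ h * pd h (fpow k μ a) σ + μ * fpow k μ a σ
      = μ * a ^ k * fpow k (μ + 1) a σ := by
  rw [sum_congr rfl fun h hh => by rw [pd_fpow k μ a hh hP],
    fpow_eq_Pfun_mul μ (Complex.slitPlane_ne_zero hP), Pfun_eq_add_sum]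
  have hsum : ∑ h ∈ Icc 1 k, σ h * (-μ * pdPfun k a h * fpow k (μ + 1) a σ)
      = -μ * fpow k (μ + 1) a σ * ∑ h ∈ Icc 1 k, σ h * pdPfun k a h := by
    rw [mul_sum]
    exact sum_congr rfl fun _ _ => by ring
  rw [hsum]
  ring

lemma pd_congr_of_eqOn {f g : (ℕ → ℂ) → ℂ} {U : Set (ℕ → ℂ)} (hU : IsOpen U) (hfg : U.EqOn f g)
    {σ : ℕ → ℂ} (hσ : σ ∈ U) (h : ℕ) : pd h f σ = pd h g σ := by
  refine Filter.EventuallyEq.deriv_eq ?_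
  have hcont : Continuous fun t => update σ h t := continuous_const.update h continuous_id
  have hnhds : U ∈ nhds (update σ h (σ h)) := by rw [update_eq_self]; exact hU.mem_nhds hσ
  filter_upwards [hcont.continuousAt.preimage_mem_nhds hnhds] with t ht using hfg ht

lemma pd_const_mul (h : ℕ) (c : ℂ) (f : (ℕ → ℂ) → ℂ) (σ : ℕ → ℂ) :
    pd h (fun τ => c * f τ) σ = c * pd h f σ := by
  simp only [pd, deriv_const_mul_field']

lemma pdPfun_one_mul {k m : ℕ} (a : ℂ) (hm : m ∈ Icc 2 k) :
    pdPfun k a 1 * pdPfun k a (m - 1) = a ^ k * pdPfun k a m := by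
  obtain ⟨h2m, hmk⟩ := mem_Icc.mp hm
  obtain ⟨j, rfl⟩ : ∃ j, m = j + 1 := ⟨m - 1, by omega⟩
  obtain ⟨l, rfl⟩ : ∃ l, k = j + 1 + l := ⟨k - (j + 1), by omega⟩
  simp only [pdPfun, Nat.add_sub_cancel, show j + 1 + l - 1 = j + l by omega,
    show j + 1 + l - j = l + 1 by omega, show j + 1 + l - (j + 1) = l by omega]
  ring

/-- For each `m ∈ [2,k]`, the operator `T^m_μ := ∂_1 ∂_{m-1} + ∂_m (E + μ)`
(with `E := Σ_{h=1}^k σ_h ∂_h`) annihilates `P_σ(a)^{-μ}` on every open domain on which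
a branch of `P_σ(a)^{-μ}` is defined. -/
theorem Tm_annihilates_Ppow (k : ℕ) (μ a : ℂ) (m : ℕ) (hm : m ∈ Icc 2 k)
    (U : Set (ℕ → ℂ)) (hU : IsOpen U) (hP : ∀ σ ∈ U, Pfun k σ a ∈ Complex.slitPlane)
    (σ : ℕ → ℂ) (hσ : σ ∈ U) :
    pd 1 (pd (m - 1) (fpow k μ a)) σ +
      pd m (fun τ => ∑ h ∈ Icc 1 k, τ h * pd h (fpow k μ a) τ + μ * fpow k μ a τ) σ = 0 := by
  obtain ⟨h2m, hmk⟩ := mem_Icc.mp hm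
  have h1 : 1 ∈ Icc 1 k := mem_Icc.mpr ⟨le_rfl, by omega⟩
  have hm1 : m - 1 ∈ Icc 1 k := mem_Icc.mpr ⟨by omega, by omega⟩
  have hm' : m ∈ Icc 1 k := mem_Icc.mpr ⟨by omega, hmk⟩
  rw [pd_congr_of_eqOn hU (fun τ hτ => pd_fpow k μ a hm1 (hP τ hτ)) hσ,
    pd_congr_of_eqOn hU (fun τ hτ => sum_mul_pd_fpow_add k μ a (hP τ hτ)) hσ,
    pd_const_mul, pd_const_mul, pd_fpow k _ a h1 (hP σ hσ), pd_fpow k _ a hm' (hP σ hσ)]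
  linear_combination μ * (μ + 1) * fpow k (μ + 1 + 1) a σ * pdPfun_one_mul a hm

end
end

section
/- The operators U_{−1} := Σ_{h=0}^{k−1}(k−h)σ_h ∂_{h+1} (with σ_0 = 1), 2U_0 + kμ := 2Σ_{h=1}^k h σ_h ∂_h + kμ, and U_1 + μσ_1 := Σ_{h=1}^k (σ_1σ_h − (h+1)σ_{h+1})∂_h + μσ_1 (with σ_{k+1} = 0) satisfy the sl_2 commutation relations: [2U_0+kμ, U_{−1}] = −2U_{−1}, [2U_0+kμ, U_1+μσ_1] = 2(U_1+μσ_1), and [U_{−1}, U_1+μσ_1] = 2U_0 + kμ. -/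
open MvPolynomial Finset

noncomputable section

/-- Polynomials in the variables `σ_1, …, σ_k` (we use `ℕ`-indexed variables,
the variable `X h` playing the role of `σ_h`). -/
abbrev WPoly : Type := MvPolynomial ℕ ℂ

/-- The partial derivative `∂_h = ∂/∂σ_h` as a linear endomorphism. -/
def Dop (h : ℕ) : Module.End ℂ WPoly := (MvPolynomial.pderiv h).toLinearMap

/-- Multiplication by a polynomial as a linear endomorphism. -/
def Mop (p : WPoly) : Module.End ℂ WPoly := LinearMap.mulLeft ℂ p

/-- `σ_h`, with the conventions `σ_0 = 1` and `σ_h = 0` for `h > k`. -/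
def sig (k h : ℕ) : WPoly := if h = 0 then 1 else if h ≤ k then X h else 0

/-- The Euler operator `E := Σ_{h=1}^k σ_h ∂_h`. -/
def Eop (k : ℕ) : Module.End ℂ WPoly := ∑ h ∈ Icc 1 k, Mop (X h) * Dop h

/-- `U_0 := Σ_{h=1}^k h σ_h ∂_h`. -/
def U0op (k : ℕ) : Module.End ℂ WPoly := ∑ h ∈ Icc 1 k, (h : ℂ) • (Mop (X h) * Dop h)

/-- `U_{-1} := Σ_{h=0}^{k-1} (k-h) σ_h ∂_{h+1}` (with `σ_0 = 1`). -/
def Um1op (k : ℕ) : Module.End ℂ WPoly :=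
  ∑ h ∈ range k, ((k - h : ℕ) : ℂ) • (Mop (sig k h) * Dop (h + 1))

/-- `U_1 := Σ_{h=1}^k (σ_1 σ_h - (h+1) σ_{h+1}) ∂_h` (with `σ_{k+1} = 0`). -/
def U1op (k : ℕ) : Module.End ℂ WPoly :=
  ∑ h ∈ Icc 1 k, Mop (X 1 * X h - ((h + 1 : ℕ) : ℂ) • sig k (h + 1)) * Dop h

/-- `T^m_μ := ∂_1 ∂_{m-1} + ∂_m (E + μ)`. -/
def Tmu (k : ℕ) (μ : ℂ) (m : ℕ) : Module.End ℂ WPoly :=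
  Dop 1 * Dop (m - 1) + Dop m * (Eop k + μ • (1 : Module.End ℂ WPoly))

/-- `A_{p,q} := ∂_p ∂_q - ∂_{p+1} ∂_{q-1}`. -/
def Aop (p q : ℕ) : Module.End ℂ WPoly := Dop p * Dop q - Dop (p + 1) * Dop (q - 1)

/-- The weight `w(α) := Σ_j j·α_j` of an exponent. -/
def wt (α : ℕ →₀ ℕ) : ℕ := ∑ j ∈ α.support, j * α j

/-- The weight-`r` homogeneous part of a polynomial (`σ_h` has weight `h`). -/
def weightPart (r : ℕ) (p : WPoly) : WPoly :=
  ∑ α ∈ p.support.filter (fun α => wt α = r), monomial α (coeff α p)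

/-- `m̃_{q,r}(σ) := q! Σ_{|α| = q, w(α) = r} σ^α / α!`. -/
def mtilde (k q r : ℕ) : WPoly :=
  (q.factorial : ℂ) •
    ∑ α ∈ (Finset.Nat.antidiagonalTuple k q).filter
        (fun α => ∑ j : Fin k, ((j : ℕ) + 1) * α j = r),
      (((∏ j : Fin k, Nat.factorial (α j)) : ℕ) : ℂ)⁻¹ • ∏ j : Fin k, X ((j : ℕ) + 1) ^ α j

/-- `x := Σ_{h=1}^k (-1)^h σ_h`. -/
def xpoly (k : ℕ) : WPoly := ∑ h ∈ Icc 1 k, C ((-1 : ℂ) ^ h) * X h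

/-- `Γ_{μ,p} := (-1)^p μ(μ+1)⋯(μ+p-1)/p!`, the coefficient of `x^p` in `(1+x)^{-μ}`. -/
def GammaC (μ : ℂ) (p : ℕ) : ℂ := (-1 : ℂ) ^ p * (∏ i ∈ range p, (μ + i)) / (p.factorial : ℂ)

/-- `Φ_{μ,q}` : the weight-`q` part of the Taylor expansion at `σ = 0` of
`(1 + Σ_{h=1}^k (-1)^h σ_h)^{-μ}`.  Since the weight-`q` part of `x^p` vanishes for
`p > q`, it suffices to truncate the series at order `q`. -/
def Phi (k : ℕ) (μ : ℂ) (q : ℕ) : WPoly :=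
  weightPart q (∑ p ∈ range (q + 1), GammaC μ p • xpoly k ^ p)

/-- `P_σ(a) := a^k + Σ_{h=1}^k (-1)^h σ_h a^{k-h}` as a polynomial in `σ` (with `a ∈ ℂ` fixed). -/
def Ppol (k : ℕ) (a : ℂ) : WPoly :=
  C (a ^ k) + ∑ h ∈ Icc 1 k, C ((-1 : ℂ) ^ h * a ^ (k - h)) * X h

/-- `P'_σ(a) = ∂P_σ(a)/∂a` as a polynomial in `σ`. -/
def PpolDeriv (k : ℕ) (a : ℂ) : WPoly :=
  C ((k : ℂ) * a ^ (k - 1)) +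
    ∑ h ∈ Icc 1 k, C ((-1 : ℂ) ^ h * ((k - h : ℕ) : ℂ) * a ^ (k - h - 1)) * X h

/-! `U_{-1}`, `U_0` and `U_1` are derivations of `ℂ[σ]`, so each commutator of two of them is again
a derivation and is determined by its values on the generators `σ_j`, `1 ≤ j ≤ k`. There the
relations reduce to polynomial identities in `σ`, which the conventions `σ_0 = 1`,
`σ_{k+1} = 0` make uniform in `j`. The `μ`-terms contribute `[D, σ_1] = D σ_1` for a derivation
`D`, and the constant `kμ` is central. -/

section Derivations

variable {R A : Type*}

theorem Derivation.finset_sum_apply [CommSemiring R] [CommSemiring A] [Algebra R A]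
    {M ι : Type*} [AddCommMonoid M] [Module A M] [Module R M] (s : Finset ι)
    (D : ι → Derivation R A M) (a : A) : (∑ i ∈ s, D i) a = ∑ i ∈ s, D i a := by
  rw [← Derivation.coeFnAddMonoidHom_apply, map_sum, Finset.sum_apply]
  rfl

variable [CommRing R] [CommRing A] [Algebra R A]

theorem Derivation.commutator_mulLeft (D : Derivation R A A) (p : A) :
    (D : Module.End R A) * LinearMap.mulLeft R p - LinearMap.mulLeft R p * D =
      LinearMap.mulLeft R (D p) := by
  ext f
  simp [D.leibniz, smul_eq_mul]
  ring

theorem MvPolynomial.derivation_commutator_ext {σ : Type*}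
    {D₁ D₂ D₃ : Derivation R (MvPolynomial σ R) (MvPolynomial σ R)}
    (h : ∀ i, D₁ (D₂ (X i)) - D₂ (D₁ (X i)) = D₃ (X i)) :
    (D₁ : Module.End R (MvPolynomial σ R)) * D₂ - D₂ * D₁ = D₃ := by
  rw [← Ring.lie_def, ← Derivation.commutator_coe_linear_map,
    MvPolynomial.derivation_ext (D₁ := ⁅D₁, D₂⁆) (D₂ := D₃) fun i => by
      rw [Derivation.commutator_apply, h]]

end Derivations

namespace Sl2

def vectorField (s : Finset ℕ) (c : ℕ → ℂ) (p : ℕ → WPoly) (ι : ℕ → ℕ) :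
    Derivation ℂ WPoly WPoly :=
  ∑ h ∈ s, c h • p h • pderiv (ι h)

theorem coe_vectorField (s : Finset ℕ) (c : ℕ → ℂ) (p : ℕ → WPoly) (ι : ℕ → ℕ) :
    (vectorField s c p ι : Module.End ℂ WPoly) = ∑ h ∈ s, c h • (Mop (p h) * Dop (ι h)) := by
  refine LinearMap.ext fun f => ?_
  simp [vectorField, Mop, Dop, Derivation.finset_sum_apply]

theorem vectorField_X (s : Finset ℕ) (c : ℕ → ℂ) (p : ℕ → WPoly) (ι : ℕ → ℕ) (j : ℕ) :
    vectorField s c p ι (X j) = ∑ h ∈ s with ι h = j, c h • p h := by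
  rw [Finset.sum_filter]
  refine (Derivation.finset_sum_apply _ _ _).trans (Finset.sum_congr rfl fun h _ => ?_)
  by_cases hj : ι h = j <;> simp [pderiv_X, hj]

theorem vectorField_X_eq_zero {s : Finset ℕ} {c : ℕ → ℂ} {p : ℕ → WPoly} {ι : ℕ → ℕ} {j : ℕ}
    (hj : ∀ h ∈ s, ι h ≠ j) : vectorField s c p ι (X j) = 0 := by
  rw [vectorField_X, Finset.filter_false_of_mem hj, Finset.sum_empty]

theorem sig_zero (k : ℕ) : sig k 0 = 1 := rfl

theorem sig_of_mem {k j : ℕ} (hj : j ∈ Icc 1 k) : sig k j = X j := by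
  rw [Finset.mem_Icc] at hj
  rw [sig, if_neg (by omega), if_pos hj.2]

theorem sig_of_lt {k j : ℕ} (hj : k < j) : sig k j = 0 := by
  rw [sig, if_neg (by omega), if_neg (by omega)]

theorem commutator_eq_of_sig {k : ℕ} {D₁ D₂ D₃ : Derivation ℂ WPoly WPoly}
    (h₁ : ∀ j ∉ Icc 1 k, D₁ (X j) = 0) (h₂ : ∀ j ∉ Icc 1 k, D₂ (X j) = 0)
    (h₃ : ∀ j ∉ Icc 1 k, D₃ (X j) = 0)
    (h : ∀ j ∈ Icc 1 k, D₁ (D₂ (sig k j)) - D₂ (D₁ (sig k j)) = D₃ (sig k j)) :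
    (D₁ : Module.End ℂ WPoly) * D₂ - D₂ * D₁ = D₃ := by
  refine MvPolynomial.derivation_commutator_ext fun j => ?_
  by_cases hj : j ∈ Icc 1 k
  · rw [← sig_of_mem hj]
    exact h j hj
  · rw [h₁ j hj, h₂ j hj, h₃ j hj, map_zero, map_zero, sub_zero]

def U0der (k : ℕ) : Derivation ℂ WPoly WPoly := vectorField (Icc 1 k) (↑) X id

def Um1der (k : ℕ) : Derivation ℂ WPoly WPoly :=
  vectorField (range k) (fun h => ((k - h : ℕ) : ℂ)) (sig k) (· + 1)

def U1der (k : ℕ) : Derivation ℂ WPoly WPoly :=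
  vectorField (Icc 1 k) 1 (fun h => X 1 * X h - ((h + 1 : ℕ) : ℂ) • sig k (h + 1)) id

theorem coe_U0der (k : ℕ) : (U0der k : Module.End ℂ WPoly) = U0op k :=
  coe_vectorField _ _ _ _

theorem coe_Um1der (k : ℕ) : (Um1der k : Module.End ℂ WPoly) = Um1op k :=
  coe_vectorField _ _ _ _

theorem coe_U1der (k : ℕ) : (U1der k : Module.End ℂ WPoly) = U1op k := by
  simp [U1der, coe_vectorField, U1op]

theorem U0der_X_of_not_mem {k j : ℕ} (hj : j ∉ Icc 1 k) : U0der k (X j) = 0 :=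
  vectorField_X_eq_zero fun _ hh h => hj (h ▸ hh)

theorem Um1der_X_of_not_mem {k j : ℕ} (hj : j ∉ Icc 1 k) : Um1der k (X j) = 0 :=
  vectorField_X_eq_zero fun _ hh h => hj (by simp at hh ⊢; omega)

theorem U1der_X_of_not_mem {k j : ℕ} (hj : j ∉ Icc 1 k) : U1der k (X j) = 0 :=
  vectorField_X_eq_zero fun _ hh h => hj (h ▸ hh)

theorem U0der_sig (k j : ℕ) : U0der k (sig k j) = (j : ℂ) • sig k j := by
  rcases Nat.eq_zero_or_pos j with rfl | hj₀
  · simp [sig_zero]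
  rcases le_or_gt j k with hjk | hjk
  · have hj : j ∈ Icc 1 k := Finset.mem_Icc.2 ⟨hj₀, hjk⟩
    rw [sig_of_mem hj, U0der, vectorField_X]
    simp only [id_eq]
    rw [Finset.filter_eq', if_pos hj, Finset.sum_singleton]
  · simp [sig_of_lt hjk]

theorem Um1der_sig (k : ℕ) {j : ℕ} (hj₀ : 1 ≤ j) :
    Um1der k (sig k j) = (k + 1 - j : ℂ) • sig k (j - 1) := by
  rcases le_or_gt j k with hjk | hjk
  · have hj : j ∈ Icc 1 k := Finset.mem_Icc.2 ⟨hj₀, hjk⟩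
    have hfilter : (range k).filter (· + 1 = j) = {j - 1} := by
      ext h
      simp only [Finset.mem_filter, Finset.mem_range, Finset.mem_singleton]
      omega
    rw [sig_of_mem hj, Um1der, vectorField_X, hfilter, Finset.sum_singleton,
      Nat.cast_sub (by omega), Nat.cast_sub hj₀, Nat.cast_one]
    ring_nf
  · rw [sig_of_lt hjk, map_zero]
    rcases (Nat.succ_le_of_lt hjk).eq_or_lt with rfl | hjk'
    · simp
    · rw [sig_of_lt (by omega : k < j - 1), smul_zero]

theorem U1der_sig {k : ℕ} (hk : 1 ≤ k) (j : ℕ) :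
    U1der k (sig k j) = sig k 1 * sig k j - (j + 1 : ℂ) • sig k (j + 1) := by
  rcases Nat.eq_zero_or_pos j with rfl | hj₀
  · simp [sig_zero]
  rcases le_or_gt j k with hjk | hjk
  · have hj : j ∈ Icc 1 k := Finset.mem_Icc.2 ⟨hj₀, hjk⟩
    rw [sig_of_mem hj, sig_of_mem (Finset.mem_Icc.2 ⟨le_rfl, hk⟩), U1der, vectorField_X]
    simp only [id_eq]
    rw [Finset.filter_eq', if_pos hj, Finset.sum_singleton]
    simp
  · simp [sig_of_lt hjk, sig_of_lt (by omega : k < j + 1)]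

theorem U0op_commutator_Um1op (k : ℕ) : U0op k * Um1op k - Um1op k * U0op k = -Um1op k := by
  rw [← coe_U0der, ← coe_Um1der, ← Derivation.coe_neg_linearMap]
  refine commutator_eq_of_sig (fun _ => U0der_X_of_not_mem) (fun _ => Um1der_X_of_not_mem)
    (fun _ hj => by rw [Derivation.neg_apply, Um1der_X_of_not_mem hj, neg_zero]) fun j hj => ?_
  have hj₁ : 1 ≤ j := (Finset.mem_Icc.1 hj).1
  rw [Derivation.neg_apply, Um1der_sig k hj₁, U0der_sig, Derivation.map_smul,
    Derivation.map_smul, U0der_sig, Um1der_sig k hj₁, Nat.cast_sub hj₁, Nat.cast_one]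
  module

theorem U0op_commutator_U1op {k : ℕ} (hk : 1 ≤ k) :
    U0op k * U1op k - U1op k * U0op k = U1op k := by
  rw [← coe_U0der, ← coe_U1der]
  refine commutator_eq_of_sig (fun _ => U0der_X_of_not_mem) (fun _ => U1der_X_of_not_mem)
    (fun _ => U1der_X_of_not_mem) fun j _ => ?_
  rw [U1der_sig hk, U0der_sig, map_sub, Derivation.map_smul, Derivation.map_smul,
    Derivation.leibniz, U0der_sig, U0der_sig, U0der_sig, U1der_sig hk]
  simp only [smul_eq_mul, Algebra.smul_def, map_add, map_one, map_natCast, Nat.cast_add,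
    Nat.cast_one]
  ring

theorem Um1op_commutator_U1op {k : ℕ} (hk : 1 ≤ k) :
    Um1op k * U1op k - U1op k * Um1op k = (2 : ℂ) • U0op k := by
  rw [← coe_Um1der, ← coe_U1der, ← coe_U0der, ← Derivation.coe_smul_linearMap]
  refine commutator_eq_of_sig (fun _ => Um1der_X_of_not_mem) (fun _ => U1der_X_of_not_mem)
    (fun _ hj => by rw [Derivation.smul_apply, U0der_X_of_not_mem hj, smul_zero]) fun j hj => ?_
  have hj₁ : 1 ≤ j := (Finset.mem_Icc.1 hj).1
  rw [U1der_sig hk, Um1der_sig k hj₁, map_sub, Derivation.map_smul, Derivation.map_smul,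
    Derivation.leibniz, Um1der_sig k le_rfl, Um1der_sig k hj₁, Um1der_sig k (by omega),
    U1der_sig hk, Derivation.smul_apply, U0der_sig, Nat.sub_add_cancel hj₁, Nat.add_sub_cancel,
    Nat.sub_self, sig_zero, Nat.cast_sub hj₁]
  simp only [smul_eq_mul, Algebra.smul_def, map_add, map_sub, map_one, map_natCast, map_ofNat,
    Nat.cast_add, Nat.cast_one]
  ring

theorem U0op_commutator_Mop_X_one {k : ℕ} (hk : 1 ≤ k) :
    U0op k * Mop (X 1) - Mop (X 1) * U0op k = Mop (X 1) := by
  rw [← coe_U0der, Mop, Derivation.commutator_mulLeft,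
    ← sig_of_mem (Finset.mem_Icc.2 ⟨le_rfl, hk⟩), U0der_sig, Nat.cast_one, one_smul]

theorem Um1op_commutator_Mop_X_one {k : ℕ} (hk : 1 ≤ k) :
    Um1op k * Mop (X 1) - Mop (X 1) * Um1op k = (k : ℂ) • 1 := by
  rw [← coe_Um1der, Mop, Derivation.commutator_mulLeft,
    ← sig_of_mem (Finset.mem_Icc.2 ⟨le_rfl, hk⟩), Um1der_sig k le_rfl]
  refine LinearMap.ext fun f => ?_
  simp [sig_zero]

end Sl2

open Sl2 in
/-- The operators `U_{-1}`, `2U_0 + kμ` and `U_1 + μσ_1` satisfy the `sl_2` commutation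
relations `[2U_0+kμ, U_{-1}] = -2U_{-1}`, `[2U_0+kμ, U_1+μσ_1] = 2(U_1+μσ_1)` and
`[U_{-1}, U_1+μσ_1] = 2U_0 + kμ`. -/
theorem sl2_relations (k : ℕ) (hk : 1 ≤ k) (μ : ℂ) :
    ((2 • U0op k + ((k : ℂ) * μ) • (1 : Module.End ℂ WPoly)) * Um1op k -
        Um1op k * (2 • U0op k + ((k : ℂ) * μ) • (1 : Module.End ℂ WPoly)) =
      (-2 : ℂ) • Um1op k) ∧
    ((2 • U0op k + ((k : ℂ) * μ) • (1 : Module.End ℂ WPoly)) * (U1op k + μ • Mop (X 1)) -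
        (U1op k + μ • Mop (X 1)) * (2 • U0op k + ((k : ℂ) * μ) • (1 : Module.End ℂ WPoly)) =
      (2 : ℂ) • (U1op k + μ • Mop (X 1))) ∧
    (Um1op k * (U1op k + μ • Mop (X 1)) - (U1op k + μ • Mop (X 1)) * Um1op k =
      2 • U0op k + ((k : ℂ) * μ) • (1 : Module.End ℂ WPoly)) := by
  simp only [add_mul, mul_add, smul_mul_assoc, mul_smul_comm, one_mul, mul_one]
  refine ⟨?_, ?_, ?_⟩
  · linear_combination (norm := module) (2 : ℂ) • U0op_commutator_Um1op k
  · linear_combination (norm := module)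
      (2 : ℂ) • U0op_commutator_U1op hk + (2 * μ) • U0op_commutator_Mop_X_one hk
  · linear_combination (norm := module)
      Um1op_commutator_U1op hk + μ • Um1op_commutator_Mop_X_one hk
end
end

section
/- The vector field U_1 := Σ_{h=1}^k (σ_1σ_h − (h+1)σ_{h+1})∂_h (with σ_{k+1} := 0) satisfies U_1(P_σ(a)) = σ_1 P_σ(a) + ka P_σ(a) − a² P'_σ(a). -/
open MvPolynomial Finset

noncomputable section

/-! Since `∂_h P_σ(a) = (-1)^h a^{k-h}`, the `σ_1 σ_h` part of `U_1` sends `P_σ(a)` to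
`σ_1 (P_σ(a) - a^k)`, while the index shift `h ↦ h + 1` turns its `(h+1) σ_{h+1}` part into
`σ_1 a^k + Σ_h h (-1)^h σ_h a^{k+1-h}`, the extra term being the missing `h = 1` summand.
That last sum is `k a P_σ(a) - a² P'_σ(a)`. -/

theorem Finset.sum_Icc_one_shift {M : Type*} [AddCommMonoid M] (f : ℕ → M) (k : ℕ) :
    ∑ h ∈ Icc 1 k, f (h + 1) + f 1 = ∑ h ∈ Icc 1 k, f h + f (k + 1) := by
  induction k with
  | zero => simp
  | succ k ih =>
    rw [sum_Icc_succ_top (by omega), sum_Icc_succ_top (by omega), add_right_comm, ih]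

lemma sig_of_mem_Icc {k h : ℕ} (hh : h ∈ Icc 1 k) : sig k h = X h := by
  obtain ⟨h1, hk⟩ := mem_Icc.mp hh
  rw [sig, if_neg (by omega), if_pos hk]

lemma sig_succ_self (k : ℕ) : sig k (k + 1) = 0 := by
  rw [sig, if_neg k.succ_ne_zero, if_neg (by omega)]

lemma U1op_apply (k : ℕ) (p : WPoly) :
    U1op k p = ∑ h ∈ Icc 1 k, (X 1 * X h - ((h + 1 : ℕ) : ℂ) • sig k (h + 1)) * pderiv h p := by
  simp only [U1op, LinearMap.sum_apply, Module.End.mul_apply, Mop, Dop,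
    LinearMap.mulLeft_apply]
  rfl

lemma pderiv_Ppol {k h : ℕ} (hh : h ∈ Icc 1 k) (a : ℂ) :
    pderiv h (Ppol k a) = C ((-1 : ℂ) ^ h * a ^ (k - h)) := by
  rw [Ppol, map_add, pderiv_C, zero_add, map_sum, sum_eq_single_of_mem h hh]
  · rw [pderiv_C_mul, pderiv_X_self, mul_one]
  · intro j _ hj
    rw [pderiv_C_mul, pderiv_X_of_ne hj, mul_zero]

lemma natCast_mul_pow_sub_sub_mul_sq_mul_pow {k h : ℕ} (hh : h ≤ k) (a : ℂ) :
    (k : ℂ) * a * a ^ (k - h) - a ^ 2 * (((k - h : ℕ) : ℂ) * a ^ (k - h - 1)) =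
      h * a ^ (k + 1 - h) := by
  obtain ⟨m, rfl⟩ := Nat.exists_eq_add_of_le hh
  rw [Nat.add_sub_cancel_left, show h + m + 1 - h = m + 1 by omega]
  rcases m with _ | m
  · simp [pow_succ]
  · rw [Nat.add_sub_cancel]
    push_cast
    ring

lemma smul_Ppol_sub_smul_PpolDeriv (k : ℕ) (a : ℂ) :
    ((k : ℂ) * a) • Ppol k a - (a ^ 2) • PpolDeriv k a =
      ∑ h ∈ Icc 1 k, C ((h : ℂ) * (-1) ^ h * a ^ (k + 1 - h)) * X h := by
  have hconst : ((k : ℂ) * a) • (C (a ^ k) : WPoly) - (a ^ 2) • C ((k : ℂ) * a ^ (k - 1)) = 0 := by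
    rw [smul_eq_C_mul, smul_eq_C_mul, ← C_mul, ← C_mul, ← C_sub, ← C_0]
    congr 1
    simpa using natCast_mul_pow_sub_sub_mul_sq_mul_pow (Nat.zero_le k) a
  rw [Ppol, PpolDeriv, smul_add, smul_add, add_sub_add_comm, hconst, zero_add, smul_sum, smul_sum,
    ← sum_sub_distrib]
  refine sum_congr rfl fun h hh => ?_
  rw [smul_eq_C_mul, smul_eq_C_mul, ← mul_assoc, ← mul_assoc, ← C_mul, ← C_mul, ← sub_mul,
    ← C_sub]
  congr 2
  linear_combination (-1 : ℂ) ^ h * natCast_mul_pow_sub_sub_mul_sq_mul_pow (mem_Icc.mp hh).2 a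

lemma sum_smul_sig_succ_mul_C (k : ℕ) (hk : 1 ≤ k) (a : ℂ) :
    ∑ h ∈ Icc 1 k, (((h + 1 : ℕ) : ℂ) • sig k (h + 1)) * C ((-1 : ℂ) ^ h * a ^ (k - h)) =
      -(∑ h ∈ Icc 1 k, C ((h : ℂ) * (-1) ^ h * a ^ (k + 1 - h)) * X h + X 1 * C (a ^ k)) := by
  set f : ℕ → WPoly := fun j => C ((j : ℂ) * (-1) ^ j * a ^ (k + 1 - j)) * sig k j
  have hQ : ∑ h ∈ Icc 1 k, f h = ∑ h ∈ Icc 1 k, C ((h : ℂ) * (-1) ^ h * a ^ (k + 1 - h)) * X h :=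
    sum_congr rfl fun h hh => by simp only [f, sig_of_mem_Icc hh]
  have hf1 : f 1 = -(X 1 * C (a ^ k)) := by
    simp [f, sig_of_mem_Icc (mem_Icc.mpr ⟨le_rfl, hk⟩), mul_comm]
  have hf_top : f (k + 1) = 0 := by simp only [f, sig_succ_self, mul_zero]
  calc _ = -∑ h ∈ Icc 1 k, f (h + 1) := by
        rw [← sum_neg_distrib]
        refine sum_congr rfl fun h _ => ?_
        simp only [f, smul_eq_C_mul, Nat.add_sub_add_right, pow_succ, C_mul, map_neg, map_one, Nat.cast_succ]
        ring
    _ = _ := by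
        rw [eq_sub_of_add_eq (sum_Icc_one_shift f k), hQ, hf1, hf_top]
        abel

/-- `U_1(P_σ(a)) = σ_1 P_σ(a) + k a P_σ(a) - a² P'_σ(a)`. -/
theorem U1_on_P (k : ℕ) (hk : 1 ≤ k) (a : ℂ) :
    U1op k (Ppol k a) =
      X 1 * Ppol k a + ((k : ℂ) * a) • Ppol k a - (a ^ 2) • PpolDeriv k a := by
  have hX1 : ∑ h ∈ Icc 1 k, X 1 * X h * C ((-1 : ℂ) ^ h * a ^ (k - h)) =
      X 1 * (Ppol k a - C (a ^ k)) := by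
    rw [Ppol, add_sub_cancel_left, mul_sum]
    exact sum_congr rfl fun h _ => by ring
  calc U1op k (Ppol k a)
      = ∑ h ∈ Icc 1 k, (X 1 * X h - ((h + 1 : ℕ) : ℂ) • sig k (h + 1)) *
          C ((-1 : ℂ) ^ h * a ^ (k - h)) := by
        rw [U1op_apply]
        exact sum_congr rfl fun h hh => by rw [pderiv_Ppol hh]
    _ = X 1 * (Ppol k a - C (a ^ k)) +
          (∑ h ∈ Icc 1 k, C ((h : ℂ) * (-1) ^ h * a ^ (k + 1 - h)) * X h + X 1 * C (a ^ k)) := by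
        simp only [sub_mul, sum_sub_distrib, hX1, sum_smul_sig_succ_mul_C k hk, sub_neg_eq_add]
    _ = _ := by
        rw [add_sub_assoc, smul_Ppol_sub_smul_PpolDeriv]
        ring

end
end

section
/- The polynomials Φ_{μ,q} satisfy: U_{−1}(Φ_{μ,q}) = (kμ + q − 1)Φ_{μ,q−1}, (U_1 + μσ_1)(Φ_{μ,q}) = (q+1)Φ_{μ,q+1}, and U_0(Φ_{μ,q}) = q·Φ_{μ,q} for all q ∈ ℕ (with Φ_{μ,−1} := 0). -/
open MvPolynomial Finset

noncomputable section

/-! Write `x = Σ_{h=1}^k (-1)^h σ_h` and `S_N(t) = Σ_{p ≤ N} Γ_{μ,p} t^p` for the binomial series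
of `(1+t)^{-μ}` truncated at order `N`. Since `x^p` has no terms of weight `< p`, `Φ_{μ,q}` is the
weight-`q` part of `S_N(x)` for every `N ≥ q`.

The operators `U_{-1}`, `U_0`, `U_1` are derivations, so `U(S_N(x)) = S_N'(x) · U(x)`, and a direct
computation gives `U_{-1}(x) = U_0(x) - k(1+x)` and `U_1(x) = U_0(x) + σ_1(1+x)`. Together with
`(1+t) S_N'(t) + μ S_N(t) = -(N+1) Γ_{μ,N+1} t^N` this yields
`U_{-1}(S_N(x)) = (U_0 + kμ)(S_N(x)) + O(x^N)` and
`(U_1 + μσ_1)(S_N(x)) = U_0(S_N(x)) + O(σ_1 x^N)`.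
As `U_{-1}`, `U_0`, `U_1 + μσ_1` shift weights by `-1, 0, 1`, taking weight components commutes
with them up to that shift; the error terms have no component in the relevant weight, and `U_0`
acts on weight-`q` polynomials in `σ_1, …, σ_k` by `q` (Euler's identity). -/

theorem sum_Icc_one_eq_sum_range {M : Type*} [AddCommMonoid M] (f : ℕ → M) (k : ℕ) :
    ∑ h ∈ Icc 1 k, f h = ∑ h ∈ range k, f (h + 1) := by
  rw [range_eq_Ico, sum_Ico_add' f, zero_add, Ico_add_one_right_eq_Icc]

theorem Finsupp.weight_natCast {σ : Type*} (w : σ → ℕ) (d : σ →₀ ℕ) :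
    Finsupp.weight (fun i => (w i : ℤ)) d = Finsupp.weight w d := by
  simp [Finsupp.weight_apply, Finsupp.sum]

namespace MvPolynomial

variable {σ R : Type*}

theorem weightedHomogeneousComponent_add_apply_of_shift {M : Type*} [CommSemiring R]
    [AddCancelCommMonoid M] {w : σ → M} {s : M}
    (L : MvPolynomial σ R →ₗ[R] MvPolynomial σ R)
    (hL : ∀ n p, IsWeightedHomogeneous w p n → IsWeightedHomogeneous w (L p) (n + s))
    (n : M) (p : MvPolynomial σ R) :
    weightedHomogeneousComponent w (n + s) (L p) = L (weightedHomogeneousComponent w n p) := by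
  have hp := weightedHomogeneousComponent_finsupp (w := w) p
  have hLp : (Function.support fun m => L (weightedHomogeneousComponent w m p)).Finite :=
    hp.subset fun m hm h => hm (by simp [h])
  have hL_finsum : L (∑ᶠ m, weightedHomogeneousComponent w m p) =
      ∑ᶠ m, L (weightedHomogeneousComponent w m p) :=
    L.toAddMonoidHom.map_finsum hp
  have hC_finsum : weightedHomogeneousComponent w (n + s)
        (∑ᶠ m, L (weightedHomogeneousComponent w m p)) =
      ∑ᶠ m, weightedHomogeneousComponent w (n + s) (L (weightedHomogeneousComponent w m p)) :=
    (weightedHomogeneousComponent w (n + s)).toAddMonoidHom.map_finsum hLp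
  have hhom m := hL m _ (weightedHomogeneousComponent_isWeightedHomogeneous m p)
  conv_lhs => rw [← sum_weightedHomogeneousComponent w p, hL_finsum, hC_finsum]
  refine (finsum_eq_single _ n fun m hm => ?_).trans (hhom n).weightedHomogeneousComponent_same
  exact (hhom m).weightedHomogeneousComponent_ne _ (by simpa using Ne.symm hm)

theorem weightedHomogeneousComponent_natCast_eq_zero_of_lt [CommSemiring R] {w : σ → ℕ}
    {p : MvPolynomial σ R} {n : ℤ} {m : ℕ} (hn : n < m)
    (hm : (m : ℕ∞) ≤ (p : MvPowerSeries σ R).weightedOrder w) :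
    weightedHomogeneousComponent (fun i => (w i : ℤ)) n p = 0 := by
  refine weightedHomogeneousComponent_eq_zero' _ _ fun d hd hdn => ?_
  have hle := hm.trans (MvPowerSeries.weightedOrder_le w (by rwa [coeff_coe, ← mem_support_iff]))
  rw [Finsupp.weight_natCast] at hdn
  exact absurd (Nat.cast_le.1 hle) (by omega)

theorem vars_weightedHomogeneousComponent_subset {M : Type*} [CommSemiring R] [AddCommMonoid M]
    (w : σ → M) (n : M) (p : MvPolynomial σ R) :
    (weightedHomogeneousComponent w n p).vars ⊆ p.vars := by
  classical
  intro i hi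
  obtain ⟨d, hd, hid⟩ := (mem_vars_iff_mem_support i).1 hi
  rw [support_weightedHomogeneousComponent, Finset.mem_filter] at hd
  exact (mem_vars_iff_mem_support i).2 ⟨d, hd.1, hid⟩

theorem IsWeightedHomogeneous.sum_weight_X_mul_pderiv_of_vars_subset [CommRing R] {w : σ → ℤ}
    {p : MvPolynomial σ R} {n : ℤ} (h : p.IsWeightedHomogeneous w n) {s : Finset σ}
    (hs : p.vars ⊆ s) :
    ∑ i ∈ s, w i • (X i * pderiv i p) = n • p := by
  classical
  conv_lhs => rw [p.as_sum]
  conv_rhs => rw [p.as_sum]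
  simp_rw [map_sum, Finset.mul_sum, Finset.smul_sum]
  rw [Finset.sum_comm]
  refine Finset.sum_congr rfl fun d hd => ?_
  simp_rw [X_mul_pderiv_monomial, ← Nat.cast_smul_eq_nsmul ℤ, smul_smul, ← Finset.sum_smul]
  rw [← h (mem_support_iff.1 hd), Finsupp.weight_apply, Finsupp.sum]
  congr 1
  refine (Finset.sum_subset (fun i hi => hs ((mem_vars_iff_mem_support i).2 ⟨d, hd, hi⟩))
    fun i _ hi => ?_).symm.trans ?_
  · simp [Finsupp.notMem_support_iff.1 hi]
  · exact Finset.sum_congr rfl fun i _ => by simp [mul_comm]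

end MvPolynomial

lemma GammaC_succ (μ : ℂ) (p : ℕ) :
    ((p : ℂ) + 1) * GammaC μ (p + 1) = -((μ + p) * GammaC μ p) := by
  rw [GammaC, GammaC, prod_range_succ, Nat.factorial_succ]
  push_cast
  field_simp
  ring

def truncBinomSeries (μ : ℂ) (N : ℕ) : Polynomial ℂ :=
  ∑ p ∈ range (N + 1), Polynomial.monomial p (GammaC μ p)

lemma one_add_X_mul_derivative_truncBinomSeries (μ : ℂ) (N : ℕ) :
    (1 + Polynomial.X) * Polynomial.derivative (truncBinomSeries μ N) +
        Polynomial.C μ * truncBinomSeries μ N =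
      -Polynomial.C (((N : ℂ) + 1) * GammaC μ (N + 1)) * Polynomial.X ^ N := by
  induction N with
  | zero => simp [truncBinomSeries, GammaC]
  | succ N ih =>
    have hrec := congrArg Polynomial.C (GammaC_succ μ (N + 1))
    simp only [map_mul, map_neg, map_add, map_natCast, map_one, Nat.cast_add, Nat.cast_one] at hrec
    rw [truncBinomSeries, sum_range_succ, ← truncBinomSeries, Polynomial.derivative_add,
      Polynomial.derivative_monomial, ← Polynomial.C_mul_X_pow_eq_monomial,
      ← Polynomial.C_mul_X_pow_eq_monomial]
    simp only [map_mul, map_add, map_natCast, map_one, Nat.cast_add, Nat.cast_one,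
      Nat.add_sub_cancel] at ih ⊢
    linear_combination ih + Polynomial.X ^ (N + 1) * hrec

lemma aeval_truncBinomSeries (x : WPoly) (μ : ℂ) (N : ℕ) :
    Polynomial.aeval x (truncBinomSeries μ N) = ∑ p ∈ range (N + 1), GammaC μ p • x ^ p := by
  simp [truncBinomSeries, Polynomial.aeval_monomial, Algebra.smul_def]

def vectorField {ι : Type*} (s : Finset ι) (g : ι → WPoly) (i : ι → ℕ) :
    Derivation ℂ WPoly WPoly :=
  ∑ h ∈ s, g h • pderiv (i h)

lemma vectorField_apply {ι : Type*} (s : Finset ι) (g : ι → WPoly) (i : ι → ℕ) (p : WPoly) :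
    vectorField s g i p = ∑ h ∈ s, g h * pderiv (i h) p := by
  rw [vectorField, ← Derivation.coeFnAddMonoidHom_apply, map_sum, Finset.sum_apply]
  rfl

@[simp] lemma Mop_apply (g p : WPoly) : Mop g p = g * p := rfl

@[simp] lemma Dop_apply (i : ℕ) (p : WPoly) : Dop i p = pderiv i p := rfl

lemma U0op_apply_eq_vectorField (k : ℕ) (p : WPoly) :
    U0op k p = vectorField (Icc 1 k) (fun h => (h : ℂ) • X h) id p := by
  simp [U0op, vectorField_apply]

lemma Um1op_apply_eq_vectorField (k : ℕ) (p : WPoly) :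
    Um1op k p = vectorField (range k) (fun h => ((k - h : ℕ) : ℂ) • sig k h) (· + 1) p := by
  simp [Um1op, vectorField_apply]

lemma U1op_apply_eq_vectorField (k : ℕ) (p : WPoly) :
    U1op k p =
      vectorField (Icc 1 k) (fun h => X 1 * X h - ((h + 1 : ℕ) : ℂ) • sig k (h + 1)) id p := by
  simp [U1op, vectorField_apply]

/-- Weights are taken in `ℤ` so that `U_{-1}` lowers every weight by one, with no special case
in weight `0`. -/
abbrev sigmaWeight : ℕ → ℤ := fun h => h

lemma isWeightedHomogeneous_sig (k h : ℕ) :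
    IsWeightedHomogeneous sigmaWeight (sig k h) h := by
  unfold sig
  split_ifs with h0
  · subst h0; exact isWeightedHomogeneous_one ℂ _
  · exact isWeightedHomogeneous_X ℂ _ h
  · exact isWeightedHomogeneous_zero ℂ _ _

lemma isWeightedHomogeneous_vectorField {ι : Type*} {s : Finset ι} {g : ι → WPoly} {i : ι → ℕ}
    {e : ℤ} (hg : ∀ h ∈ s, IsWeightedHomogeneous sigmaWeight (g h) (i h + e))
    {p : WPoly} {n : ℤ} (hp : IsWeightedHomogeneous sigmaWeight p n) :
    IsWeightedHomogeneous sigmaWeight (vectorField s g i p) (n + e) := by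
  rw [vectorField_apply]
  refine IsWeightedHomogeneous.sum _ _ _ fun h hh => ?_
  have := (hg h hh).mul (hp.pderiv (sub_add_cancel n (i h : ℤ)))
  rwa [show (i h : ℤ) + e + (n - i h) = n + e by ring] at this

lemma pderiv_xpoly {k h : ℕ} (hh : h ∈ Icc 1 k) : pderiv h (xpoly k) = C ((-1 : ℂ) ^ h) := by
  rw [xpoly, map_sum, sum_eq_single h (fun j _ hj => by simp [pderiv_X_of_ne hj])
    (fun h' => absurd hh h')]
  simp

lemma vectorField_xpoly {ι : Type*} {k : ℕ} {s : Finset ι} (g : ι → WPoly) {i : ι → ℕ}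
    (hi : ∀ h ∈ s, i h ∈ Icc 1 k) :
    vectorField s g i (xpoly k) = ∑ h ∈ s, C ((-1 : ℂ) ^ i h) * g h := by
  rw [vectorField_apply]
  exact sum_congr rfl fun h hh => by rw [pderiv_xpoly (hi h hh), mul_comm]

lemma sum_range_succ_mul_sig (k : ℕ) (f : ℕ → ℂ) :
    ∑ h ∈ range (k + 1), C (f h) * sig k h = C (f 0) + ∑ h ∈ Icc 1 k, C (f h) * X h := by
  rw [sum_range_succ', sum_Icc_one_eq_sum_range, add_comm]
  congr 1
  · simp [sig]
  · exact sum_congr rfl fun h hh => by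
      rw [mem_range] at hh; rw [sig, if_neg (by omega), if_pos (by omega)]

lemma one_add_xpoly (k : ℕ) : 1 + xpoly k = ∑ h ∈ range (k + 1), C ((-1 : ℂ) ^ h) * sig k h := by
  rw [sum_range_succ_mul_sig, xpoly]
  simp

lemma U0op_xpoly (k : ℕ) :
    U0op k (xpoly k) = ∑ h ∈ range (k + 1), C ((h : ℂ) * (-1) ^ h) * sig k h := by
  rw [U0op_apply_eq_vectorField, vectorField_xpoly (i := id) _ fun h hh => hh,
    sum_range_succ_mul_sig]
  simp only [CharP.cast_eq_zero, zero_mul, map_zero, zero_add, map_mul, smul_eq_C_mul, map_natCast,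
    id]
  exact sum_congr rfl fun h _ => by ring

lemma Um1op_xpoly (k : ℕ) :
    Um1op k (xpoly k) = U0op k (xpoly k) - C (k : ℂ) * (1 + xpoly k) := by
  rw [Um1op_apply_eq_vectorField, vectorField_xpoly _ fun h hh => by simp at hh ⊢; omega,
    U0op_xpoly, one_add_xpoly, mul_sum, ← sum_sub_distrib]
  calc ∑ h ∈ range k, C ((-1 : ℂ) ^ (h + 1)) * (((k - h : ℕ) : ℂ) • sig k h)
      = ∑ h ∈ range (k + 1), C ((-1 : ℂ) ^ (h + 1)) * (((k - h : ℕ) : ℂ) • sig k h) := by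
        simp [sum_range_succ]
    _ = _ := sum_congr rfl fun h hh => by
        rw [mem_range] at hh
        rw [smul_eq_C_mul, Nat.cast_sub (by omega)]
        simp only [map_mul, map_sub, map_natCast, map_pow, map_neg, map_one]
        ring

lemma U1op_xpoly {k : ℕ} (hk : 1 ≤ k) :
    U1op k (xpoly k) = U0op k (xpoly k) + X 1 * (1 + xpoly k) := by
  set f : ℕ → WPoly := fun h => C ((h : ℂ) * (-1) ^ h) * sig k h with hf
  have hsplit : U1op k (xpoly k) = X 1 * xpoly k + ∑ h ∈ Icc 1 k, f (h + 1) := by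
    rw [U1op_apply_eq_vectorField, vectorField_xpoly (i := id) _ fun h hh => hh, xpoly, mul_sum,
      ← sum_add_distrib]
    refine sum_congr rfl fun h _ => ?_
    simp only [hf, id, smul_eq_C_mul, map_mul, map_natCast, map_pow, map_neg, map_one]
    push_cast
    ring
  have htel : U0op k (xpoly k) = ∑ h ∈ Icc 1 k, f (h + 1) - X 1 := by
    have h0 : f 0 = 0 := by simp [hf]
    have h1 : f 1 = -X 1 := by simp [hf, sig, hk]
    have hk1 : f (k + 1) = 0 := by simp [hf, sig]
    have := sum_range_succ f (k + 1)
    rw [sum_range_succ', sum_range_succ', h0, h1, hk1] at this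
    rw [U0op_xpoly, sum_Icc_one_eq_sum_range]
    linear_combination -this
  linear_combination hsplit - htel

lemma weight_sigmaWeight (α : ℕ →₀ ℕ) : Finsupp.weight sigmaWeight α = wt α := by
  simp [Finsupp.weight_apply, Finsupp.sum, wt, mul_comm]

lemma weightPart_eq (r : ℕ) (p : WPoly) :
    weightPart r p = weightedHomogeneousComponent sigmaWeight r p := by
  classical
  rw [weightPart, weightedHomogeneousComponent_apply]
  exact sum_congr (filter_congr fun α _ => by rw [weight_sigmaWeight, Nat.cast_inj]) fun _ _ => rfl

lemma le_weightedOrder_xpoly (k : ℕ) :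
    1 ≤ (xpoly k : MvPowerSeries ℕ ℂ).weightedOrder id := by
  refine MvPowerSeries.nat_le_weightedOrder _ fun d hd => ?_
  rw [coeff_coe, xpoly, coeff_sum]
  refine sum_eq_zero fun h hh => ?_
  rw [coeff_C_mul, coeff_X, if_neg, mul_zero]
  rintro rfl
  simp only [Finsupp.weight_single, smul_eq_mul, one_mul, id] at hd
  simp at hh
  omega

lemma weightedHomogeneousComponent_xpoly_pow (k : ℕ) {n : ℤ} {N : ℕ} (hn : n < N) :
    weightedHomogeneousComponent sigmaWeight n (xpoly k ^ N) = 0 := by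
  refine weightedHomogeneousComponent_natCast_eq_zero_of_lt (w := id) hn ?_
  rw [MvPolynomial.coe_pow]
  calc (N : ℕ∞) = N • 1 := by simp
    _ ≤ N • (xpoly k : MvPowerSeries ℕ ℂ).weightedOrder id := by
      gcongr; exact le_weightedOrder_xpoly k
    _ ≤ _ := MvPowerSeries.le_weightedOrder_pow _ _

lemma Phi_eq_weightedHomogeneousComponent (k : ℕ) (μ : ℂ) {q N : ℕ} (hqN : q ≤ N) :
    Phi k μ q = weightedHomogeneousComponent sigmaWeight q
      (Polynomial.aeval (xpoly k) (truncBinomSeries μ N)) := by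
  induction N, hqN using Nat.le_induction with
  | base => rw [Phi, weightPart_eq, aeval_truncBinomSeries]
  | succ N hqN ih =>
    rw [truncBinomSeries, sum_range_succ, ← truncBinomSeries, map_add, map_add,
      Polynomial.aeval_monomial, ← Algebra.smul_def, map_smul,
      weightedHomogeneousComponent_xpoly_pow k (by omega), smul_zero, add_zero, ih]

lemma vars_Phi_subset (k : ℕ) (μ : ℂ) (q : ℕ) : (Phi k μ q).vars ⊆ Icc 1 k := by
  have hx : xpoly k ∈ supported ℂ (Icc 1 k : Set ℕ) :=
    Subalgebra.sum_mem _ fun h hh =>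
      Subalgebra.mul_mem _ (Subalgebra.algebraMap_mem _ _) (X_mem_supported.2 hh)
  have haeval : Polynomial.aeval (xpoly k) (truncBinomSeries μ q) ∈ supported ℂ (Icc 1 k : Set ℕ) :=
    Algebra.adjoin_le (Set.singleton_subset_iff.2 hx) (Polynomial.aeval_mem_adjoin_singleton ℂ _)
  rw [Phi_eq_weightedHomogeneousComponent k μ le_rfl, ← coe_subset]
  exact (coe_subset.2 (vars_weightedHomogeneousComponent_subset _ _ _)).trans
    (mem_supported.1 haeval)

lemma U0op_Phi (k : ℕ) (μ : ℂ) (q : ℕ) : U0op k (Phi k μ q) = (q : ℂ) • Phi k μ q := by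
  have hhom : IsWeightedHomogeneous sigmaWeight (Phi k μ q) q := by
    rw [Phi_eq_weightedHomogeneousComponent k μ le_rfl]
    exact weightedHomogeneousComponent_isWeightedHomogeneous _ _
  have := hhom.sum_weight_X_mul_pderiv_of_vars_subset (vars_Phi_subset k μ q)
  rw [← Int.cast_smul_eq_zsmul ℂ, Int.cast_natCast] at this
  rw [← this, U0op_apply_eq_vectorField, vectorField_apply]
  exact sum_congr rfl fun h _ => by simp [← Int.cast_smul_eq_zsmul ℂ]

lemma weightedHomogeneousComponent_U0op (k : ℕ) (n : ℤ) (p : WPoly) :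
    weightedHomogeneousComponent sigmaWeight n (U0op k p) =
      U0op k (weightedHomogeneousComponent sigmaWeight n p) := by
  have hshift := weightedHomogeneousComponent_add_apply_of_shift (s := (0 : ℤ)) (U0op k)
    (fun n p hp => by
      rw [U0op_apply_eq_vectorField]
      refine isWeightedHomogeneous_vectorField (fun h _ => ?_) hp
      rw [smul_eq_C_mul, id, add_zero]
      exact (isWeightedHomogeneous_X ℂ _ h).C_mul _) n p
  rwa [add_zero] at hshift

lemma weightedHomogeneousComponent_Um1op (k : ℕ) (n : ℤ) (p : WPoly) :
    weightedHomogeneousComponent sigmaWeight (n - 1) (Um1op k p) =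
      Um1op k (weightedHomogeneousComponent sigmaWeight n p) := by
  refine (sub_eq_add_neg n 1).symm ▸ weightedHomogeneousComponent_add_apply_of_shift (Um1op k)
    (fun n p hp => ?_) n p
  rw [Um1op_apply_eq_vectorField]
  refine isWeightedHomogeneous_vectorField (fun h _ => ?_) hp
  rw [smul_eq_C_mul, show ((h + 1 : ℕ) : ℤ) + -1 = h by push_cast; ring]
  exact (isWeightedHomogeneous_sig k h).C_mul _

lemma weightedHomogeneousComponent_X_one_mul (n : ℤ) (p : WPoly) :
    weightedHomogeneousComponent sigmaWeight (n + 1) (X 1 * p) =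
      X 1 * weightedHomogeneousComponent sigmaWeight n p :=
  weightedHomogeneousComponent_add_apply_of_shift (Mop (X 1))
    (fun n _ hp => add_comm (1 : ℤ) n ▸ (isWeightedHomogeneous_X ℂ _ 1).mul hp) n p

lemma weightedHomogeneousComponent_U1op_add (k : ℕ) (μ : ℂ) (n : ℤ) (p : WPoly) :
    weightedHomogeneousComponent sigmaWeight (n + 1) ((U1op k + μ • Mop (X 1)) p) =
      (U1op k + μ • Mop (X 1)) (weightedHomogeneousComponent sigmaWeight n p) := by
  refine weightedHomogeneousComponent_add_apply_of_shift _ (fun n p hp => ?_) n p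
  rw [LinearMap.add_apply, LinearMap.smul_apply, Mop_apply, U1op_apply_eq_vectorField]
  refine .add (isWeightedHomogeneous_vectorField (fun h _ => ?_) hp) ?_
  · rw [smul_eq_C_mul, id]
    refine .sub ?_ ((isWeightedHomogeneous_sig k (h + 1)).C_mul _)
    exact add_comm (1 : ℤ) h ▸ (isWeightedHomogeneous_X ℂ _ 1).mul (isWeightedHomogeneous_X ℂ _ h)
  · rw [smul_eq_C_mul]
    exact (add_comm (1 : ℤ) n ▸ (isWeightedHomogeneous_X ℂ _ 1).mul hp).C_mul _

lemma one_add_xpoly_mul_aeval_derivative_truncBinomSeries (k : ℕ) (μ : ℂ) (N : ℕ) :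
    (1 + xpoly k) * Polynomial.aeval (xpoly k) (Polynomial.derivative (truncBinomSeries μ N)) +
        C μ * Polynomial.aeval (xpoly k) (truncBinomSeries μ N) =
      -C (((N : ℂ) + 1) * GammaC μ (N + 1)) * xpoly k ^ N := by
  simpa only [map_add, map_mul, map_neg, map_one, map_pow, Polynomial.aeval_X, Polynomial.aeval_C,
    algebraMap_eq] using
    congrArg (Polynomial.aeval (xpoly k)) (one_add_X_mul_derivative_truncBinomSeries μ N)

lemma Um1op_aeval_truncBinomSeries (k : ℕ) (μ : ℂ) (N : ℕ) :
    Um1op k (Polynomial.aeval (xpoly k) (truncBinomSeries μ N)) =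
      U0op k (Polynomial.aeval (xpoly k) (truncBinomSeries μ N)) +
        C ((k : ℂ) * μ) * Polynomial.aeval (xpoly k) (truncBinomSeries μ N) +
        C ((k : ℂ) * (((N : ℂ) + 1) * GammaC μ (N + 1))) * xpoly k ^ N := by
  have hode := one_add_xpoly_mul_aeval_derivative_truncBinomSeries k μ N
  rw [Um1op_apply_eq_vectorField, U0op_apply_eq_vectorField, Derivation.map_aeval,
    Derivation.map_aeval, ← Um1op_apply_eq_vectorField, ← U0op_apply_eq_vectorField, Um1op_xpoly,
    smul_eq_mul, smul_eq_mul]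
  simp only [map_mul, map_add, map_one, map_natCast] at hode ⊢
  linear_combination (-(k : WPoly)) * hode

lemma U1op_add_aeval_truncBinomSeries {k : ℕ} (hk : 1 ≤ k) (μ : ℂ) (N : ℕ) :
    (U1op k + μ • Mop (X 1)) (Polynomial.aeval (xpoly k) (truncBinomSeries μ N)) =
      U0op k (Polynomial.aeval (xpoly k) (truncBinomSeries μ N)) -
        C (((N : ℂ) + 1) * GammaC μ (N + 1)) * (X 1 * xpoly k ^ N) := by
  have hode := one_add_xpoly_mul_aeval_derivative_truncBinomSeries k μ N
  rw [LinearMap.add_apply, LinearMap.smul_apply, Mop_apply, U1op_apply_eq_vectorField,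
    U0op_apply_eq_vectorField, Derivation.map_aeval, Derivation.map_aeval,
    ← U1op_apply_eq_vectorField, ← U0op_apply_eq_vectorField, U1op_xpoly hk,
    smul_eq_mul, smul_eq_mul, smul_eq_C_mul]
  simp only [map_mul, map_add, map_one, map_natCast] at hode ⊢
  linear_combination X 1 * hode

lemma Um1op_Phi (k : ℕ) (μ : ℂ) (q : ℕ) :
    Um1op k (Phi k μ q) = ((k : ℂ) * μ + q - 1) • (if q = 0 then 0 else Phi k μ (q - 1)) := by
  rw [Phi_eq_weightedHomogeneousComponent k μ le_rfl, ← weightedHomogeneousComponent_Um1op,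
    Um1op_aeval_truncBinomSeries, map_add, map_add, weightedHomogeneousComponent_C_mul,
    weightedHomogeneousComponent_C_mul, weightedHomogeneousComponent_xpoly_pow k (by omega),
    weightedHomogeneousComponent_U0op, mul_zero, add_zero]
  rcases q with _ | r
  · have hneg : weightedHomogeneousComponent sigmaWeight (-1)
        (Polynomial.aeval (xpoly k) (truncBinomSeries μ 0)) = 0 :=
      weightedHomogeneousComponent_natCast_eq_zero_of_lt (w := id) (m := 0) (by simp) (by simp)
    simp [hneg]
  · rw [Nat.cast_succ, add_sub_cancel_right, if_neg r.succ_ne_zero, Nat.add_sub_cancel,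
      ← Phi_eq_weightedHomogeneousComponent k μ r.le_succ, U0op_Phi, smul_eq_C_mul, smul_eq_C_mul]
    simp only [Nat.cast_add, Nat.cast_one, map_sub, map_add, map_one, map_natCast]
    ring

lemma U1op_add_Phi {k : ℕ} (hk : 1 ≤ k) (μ : ℂ) (q : ℕ) :
    (U1op k + μ • Mop (X 1)) (Phi k μ q) = ((q : ℂ) + 1) • Phi k μ (q + 1) := by
  rw [Phi_eq_weightedHomogeneousComponent k μ q.le_succ, ← weightedHomogeneousComponent_U1op_add,
    U1op_add_aeval_truncBinomSeries hk, map_sub, weightedHomogeneousComponent_C_mul,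
    weightedHomogeneousComponent_X_one_mul, weightedHomogeneousComponent_xpoly_pow k (by omega),
    mul_zero, mul_zero, sub_zero, weightedHomogeneousComponent_U0op, ← Nat.cast_succ,
    ← Phi_eq_weightedHomogeneousComponent k μ le_rfl, U0op_Phi]
  push_cast
  rfl

/-- The polynomials `Φ_{μ,q}` satisfy `U_{-1}(Φ_{μ,q}) = (kμ+q-1) Φ_{μ,q-1}`
(with `Φ_{μ,-1} := 0`), `(U_1 + μσ_1)(Φ_{μ,q}) = (q+1) Φ_{μ,q+1}` and
`U_0(Φ_{μ,q}) = q Φ_{μ,q}`. -/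
theorem operators_on_Phi (k : ℕ) (hk : 1 ≤ k) (μ : ℂ) (q : ℕ) :
    Um1op k (Phi k μ q) =
      ((k : ℂ) * μ + q - 1) • (if q = 0 then 0 else Phi k μ (q - 1)) ∧
    (U1op k + μ • Mop (X 1)) (Phi k μ q) = ((q : ℂ) + 1) • Phi k μ (q + 1) ∧
    U0op k (Phi k μ q) = (q : ℂ) • Phi k μ q :=
  ⟨Um1op_Phi k μ q, U1op_add_Phi hk μ q, U0op_Phi k μ q⟩
end
end

section
/- In the Weyl algebra, for every h ∈ [2,k] one has ∂_h(U_0 + kμ − 1) + ∂_{h−1}U_{−1} = k·T^h_μ + Σ_{q=1}^{k−1} (k−q)σ_q A_{h−1, q+1}, where A_{p,q} := ∂_p∂_q − ∂_{p+1}∂_{q−1}, T^h_μ := ∂_1∂_{h−1} + ∂_h(E+μ), U_0 := Σ pσ_p∂_p, U_{−1} := Σ_{p=0}^{k−1}(k−p)σ_p∂_{p+1} (σ_0 = 1), E := Σ σ_p∂_p. -/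
open MvPolynomial Finset

noncomputable section

/-! Commuting `∂_a` past `σ_p ∂_q` costs `δ_{ap} ∂_q` (Leibniz rule), so both sides become
`Σ_p c_p σ_p ∂_h ∂_p + Σ_p c'_p σ_p ∂_{h-1} ∂_{p+1}` plus `∂_1 ∂_{h-1}` and `∂_h` terms.
The `∂_h` coefficients agree, `h + (kμ - 1) + (k - h + 1) = k(1 + μ)`, and the weight `p` of
`U_0` splits as `k - (k - p)`, which is what the `A`-sum absorbs. -/

lemma MvPolynomial.pderiv_lie_pderiv {σ R : Type*} [CommRing R] (i j : σ) :
    ⁅(pderiv i : Derivation R (MvPolynomial σ R) (MvPolynomial σ R)), pderiv (R := R) j⁆ = 0 := by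
  classical
  refine derivation_ext fun n => ?_
  simp [Derivation.commutator_apply, pderiv_X, Pi.single_apply, apply_ite]

lemma Dop_mul_comm (i j : ℕ) : Dop i * Dop j = Dop j * Dop i := by
  refine LinearMap.ext fun f => sub_eq_zero.mp ?_
  simpa [Dop, Derivation.commutator_apply] using congr($(pderiv_lie_pderiv (R := ℂ) i j) f)

lemma Mop_one : Mop 1 = 1 := LinearMap.mulLeft_one ℂ WPoly

lemma Dop_mul_Mop (a : ℕ) (p : WPoly) : Dop a * Mop p = Mop p * Dop a + Mop (pderiv a p) := by
  refine LinearMap.ext fun f => ?_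
  simp only [Dop, Mop, Module.End.mul_apply, LinearMap.add_apply, LinearMap.mulLeft_apply,
    Derivation.coeFn_coe, pderiv_mul]
  ring

lemma Dop_mul_Mop_X (a p : ℕ) :
    Dop a * Mop (X p) = Mop (X p) * Dop a + if p = a then 1 else 0 := by
  rw [Dop_mul_Mop, pderiv_X, Pi.single_apply]
  split_ifs
  · rw [Mop_one]
  · simp [Mop]

lemma Dop_mul_sum_smul_Mop_X_mul (a : ℕ) (s : Finset ℕ) (c : ℕ → ℂ)
    (D : ℕ → Module.End ℂ WPoly) :
    Dop a * ∑ p ∈ s, c p • (Mop (X p) * D p) =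
      ∑ p ∈ s, c p • (Mop (X p) * (Dop a * D p)) + if a ∈ s then c a • D a else 0 := by
  simp_rw [Finset.mul_sum, mul_smul_comm, ← mul_assoc, Dop_mul_Mop_X, add_mul, smul_add,
    sum_add_distrib, ite_mul, one_mul, zero_mul, smul_ite, smul_zero, sum_ite_eq']

lemma Dop_mul_U0op {k h : ℕ} (hh : h ∈ Icc 1 k) :
    Dop h * U0op k = ∑ p ∈ Icc 1 k, (p : ℂ) • (Mop (X p) * (Dop h * Dop p)) + (h : ℂ) • Dop h := by
  rw [U0op, Dop_mul_sum_smul_Mop_X_mul, if_pos hh]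

lemma Dop_mul_Eop {k h : ℕ} (hh : h ∈ Icc 1 k) :
    Dop h * Eop k = ∑ p ∈ Icc 1 k, Mop (X p) * (Dop h * Dop p) + Dop h := by
  rw [Eop]
  simpa only [Pi.one_apply, one_smul, if_pos hh] using
    Dop_mul_sum_smul_Mop_X_mul h (Icc 1 k) 1 Dop

lemma Um1op_eq (k : ℕ) :
    Um1op k = (k : ℂ) • Dop 1 + ∑ p ∈ Icc 1 k, ((k - p : ℕ) : ℂ) • (Mop (X p) * Dop (p + 1)) := by
  set f : ℕ → Module.End ℂ WPoly := fun p => ((k - p : ℕ) : ℂ) • (Mop (sig k p) * Dop (p + 1))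
  calc Um1op k = ∑ p ∈ range (k + 1), f p := by simp [Um1op, f, sum_range_succ]
    _ = f 0 + ∑ p ∈ range k, f (p + 1) := by rw [sum_range_succ', add_comm]
    _ = _ := by
      rw [range_eq_Ico, sum_Ico_add']
      congr 1
      · simp [f, sig, Mop_one]
      · refine sum_congr rfl fun p hp => ?_
        rw [mem_Icc] at hp
        simp only [f, sig, if_neg (by omega : p ≠ 0), if_pos hp.2]

lemma sum_Icc_sub_one_tsub_smul {M : Type*} [AddCommMonoid M] [Module ℂ M] (k : ℕ)
    (f : ℕ → M) :
    ∑ q ∈ Icc 1 (k - 1), ((k - q : ℕ) : ℂ) • f q = ∑ q ∈ Icc 1 k, ((k - q : ℕ) : ℂ) • f q := by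
  refine sum_subset (Icc_subset_Icc_right (Nat.sub_le k 1)) fun q hq hq' => ?_
  obtain rfl : q = k := by simp only [mem_Icc] at hq hq'; omega
  simp

lemma Dop_mul_Um1op {k h : ℕ} (hh : 1 ≤ h) :
    Dop h * Um1op k = (k : ℂ) • (Dop 1 * Dop h) +
      ∑ p ∈ Icc 1 k, ((k - p : ℕ) : ℂ) • (Mop (X p) * (Dop h * Dop (p + 1))) +
        ((k - h : ℕ) : ℂ) • Dop (h + 1) := by
  rw [Um1op_eq, mul_add, mul_smul_comm, Dop_mul_comm, Dop_mul_sum_smul_Mop_X_mul, ← add_assoc]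
  congr 1
  split_ifs with hk
  · rfl
  · rw [Nat.sub_eq_zero_of_le (by rw [mem_Icc] at hk; omega), Nat.cast_zero, zero_smul]

theorem magic_formula_Eh_general (k : ℕ) (μ : ℂ) (h : ℕ) (hh : h ∈ Icc 2 k) :
    Dop h * (U0op k + ((k : ℂ) * μ - 1) • (1 : Module.End ℂ WPoly)) +
        Dop (h - 1) * Um1op k =
      (k : ℂ) • Tmu k μ h +
        ∑ q ∈ Icc 1 (k - 1), ((k - q : ℕ) : ℂ) • (Mop (X q) * Aop (h - 1) (q + 1)) := by
  obtain ⟨h2, hhk⟩ := mem_Icc.mp hh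
  have hh' : h ∈ Icc 1 k := mem_Icc.mpr ⟨by omega, hhk⟩
  -- `p = k - (k - p)` trades the weights of `U_0` for those of the `A`-sum.
  have hweights : ∑ p ∈ Icc 1 k, (p : ℂ) • (Mop (X p) * (Dop h * Dop p)) +
      ∑ p ∈ Icc 1 k, ((k - p : ℕ) : ℂ) • (Mop (X p) * (Dop (h - 1) * Dop (p + 1))) =
      (k : ℂ) • ∑ p ∈ Icc 1 k, Mop (X p) * (Dop h * Dop p) +
      ∑ p ∈ Icc 1 k, ((k - p : ℕ) : ℂ) • (Mop (X p) * Aop (h - 1) (p + 1)) := by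
    rw [smul_sum, ← sum_add_distrib, ← sum_add_distrib]
    refine sum_congr rfl fun p hp => ?_
    rw [Aop, Nat.sub_add_cancel (by omega), Nat.add_sub_cancel, mul_sub,
      Nat.cast_sub (mem_Icc.mp hp).2]
    module
  rw [mul_add, mul_smul_comm, mul_one, Dop_mul_U0op hh', Dop_mul_Um1op (by omega),
    Nat.sub_add_cancel (by omega), Tmu, mul_add, mul_smul_comm, mul_one, Dop_mul_Eop hh',
    sum_Icc_sub_one_tsub_smul, Nat.cast_sub (by omega : h - 1 ≤ k), Nat.cast_sub (by omega : 1 ≤ h)]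
  linear_combination (norm := module) hweights

/-- Formula `(E_h(μ))` : for `h ∈ [2,k]`,
`∂_h (U_0 + kμ - 1) + ∂_{h-1} U_{-1} = k T^h_μ + Σ_{q=1}^{k-1} (k-q) σ_q A_{h-1,q+1}`. -/
theorem magic_formula_Eh (k : ℕ) (hk : 1 ≤ k) (μ : ℂ) (h : ℕ) (hh : h ∈ Icc 2 k) :
    Dop h * (U0op k + ((k : ℂ) * μ - 1) • (1 : Module.End ℂ WPoly)) +
        Dop (h - 1) * Um1op k =
      (k : ℂ) • Tmu k μ h +
        ∑ q ∈ Icc 1 (k - 1), ((k - q : ℕ) : ℂ) • (Mop (X q) * Aop (h - 1) (q + 1)) :=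
  magic_formula_Eh_general k μ h hh

end
end
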